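/- Let A = [[1,2],[3,0]] and G := {v ∈ ℚ² : Aⁿ v ∈ ℤ² for some n ∈ ℕ}. There is no additive group homomorphism s : G → ℤ[1/3] satisfying s(a, a) = a for all a ∈ ℤ[1/3]. Equivalently, the inclusion θ : ℤ[1/3] → G, θ(a) = (a, a), admits no retraction, so the short exact sequence 0 → ℤ[1/3] → G → G/θ(ℤ[1/3]) → 0 does not split. -/

import Mathlib

/-!
The vector `y = (2, -3)` is an eigenvector of `A` for the eigenvalue `-2`, so `G` contains
`(-2)⁻ⁿ • y` for every `n`, and the value at `y` of any homomorphism `s : G → ℤ[1/3]` is divisible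
in `ℤ[1/3]` by every power of `2`, hence zero. But `5 • (1, -1) = (1, 1) + 2 • y`, so a retraction
would give `5 * s (1, -1) = 1`, which is impossible since `1/5 ∉ ℤ[1/3]`.
-/

open Matrix

/-- `q ∈ ℤ[1/b]`. -/
def MemIntInvPow (b : ℤ) (q : ℚ) : Prop := ∃ (k : ℤ) (m : ℕ), q = k / b ^ m

theorem ne_zero_of_isCoprime_of_natAbs_ne_one {a b : ℤ} (hab : IsCoprime a b)
    (ha : a.natAbs ≠ 1) : b ≠ 0 := by
  rintro rfl
  exact ha (Int.isUnit_iff_natAbs_eq.mp (isCoprime_zero_right.mp hab))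

theorem MemIntInvPow.eq_zero_of_forall_pow_mul {a b : ℤ} (hab : IsCoprime a b)
    (ha : a.natAbs ≠ 1) {q : ℚ} (hq : MemIntInvPow b q)
    (h : ∀ n : ℕ, ∃ r, MemIntInvPow b r ∧ q = a ^ n * r) : q = 0 := by
  obtain ⟨k, m, rfl⟩ := hq
  have hb : (b : ℚ) ≠ 0 := Int.cast_ne_zero.mpr (ne_zero_of_isCoprime_of_natAbs_ne_one hab ha)
  suffices k = 0 by simp [this]
  by_contra hk
  obtain ⟨n, hn⟩ := Int.finiteMultiplicity_iff.mpr ⟨ha, hk⟩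
  obtain ⟨r, ⟨k', m', rfl⟩, hr⟩ := h (n + 1)
  have hcross : k * b ^ m' = a ^ (n + 1) * (k' * b ^ m) := by
    field_simp at hr
    have hr : k * b ^ m' = b ^ m * a ^ (n + 1) * k' := by exact_mod_cast hr
    linear_combination hr
  exact hn ((hab.pow_left.pow_right).dvd_of_dvd_mul_right ⟨_, hcross⟩)

theorem MemIntInvPow.mul_ne_one {b c : ℤ} (hcb : IsCoprime c b) (hc : c.natAbs ≠ 1) {q : ℚ}
    (hq : MemIntInvPow b q) : c * q ≠ 1 := by
  obtain ⟨k, m, rfl⟩ := hq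
  have hb : (b : ℚ) ≠ 0 := Int.cast_ne_zero.mpr (ne_zero_of_isCoprime_of_natAbs_ne_one hcb hc)
  intro h
  have hck : c * k = b ^ m := by
    field_simp at h
    exact_mod_cast h
  exact hc (Int.isUnit_iff_natAbs_eq.mp (hcb.pow_right.isUnit_of_dvd' dvd_rfl ⟨k, hck.symm⟩))

section EventuallyIntegral

variable {ι : Type*} [Fintype ι] [DecidableEq ι]

def EventuallyIntegral (A : Matrix ι ι ℚ) (v : ι → ℚ) : Prop :=
  ∃ n : ℕ, ∀ i, ∃ z : ℤ, (A ^ n *ᵥ v) i = z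

theorem Matrix.pow_mulVec_of_mulVec_eq_smul {R : Type*} [CommSemiring R] {A : Matrix ι ι R}
    {v : ι → R} {c : R} (h : A *ᵥ v = c • v) (n : ℕ) : (A ^ n) *ᵥ v = c ^ n • v := by
  induction n with
  | zero => simp
  | succ n ih =>
    rw [pow_succ', ← mulVec_mulVec, ih, mulVec_smul, h, smul_smul, pow_succ]

theorem EventuallyIntegral.of_integral {A : Matrix ι ι ℚ} {v : ι → ℚ}
    (hv : ∀ i, ∃ z : ℤ, v i = z) : EventuallyIntegral A v :=
  ⟨0, by simpa using hv⟩

theorem EventuallyIntegral.inv_pow_smul {A : Matrix ι ι ℚ} {w : ι → ℚ} {c : ℚ}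
    (h : A *ᵥ w = c • w) (hc : c ≠ 0) (hw : ∀ i, ∃ z : ℤ, w i = z) (n : ℕ) :
    EventuallyIntegral A ((c ^ n)⁻¹ • w) :=
  ⟨n, by rwa [mulVec_smul, Matrix.pow_mulVec_of_mulVec_eq_smul h, smul_smul,
    inv_mul_cancel₀ (pow_ne_zero _ hc), one_smul]⟩

end EventuallyIntegral

theorem AddMonoidHom.eq_zero_of_forall_pow_zsmul {M : Type*} [AddCommGroup M] {a b : ℤ}
    (hab : IsCoprime a b) (ha : a.natAbs ≠ 1) (s : M →+ ℚ) (hs : ∀ x, MemIntInvPow b (s x))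
    {y : M} (hy : ∀ n : ℕ, ∃ z, a ^ n • z = y) : s y = 0 :=
  (hs y).eq_zero_of_forall_pow_mul hab ha fun n => by
    obtain ⟨z, rfl⟩ := hy n
    exact ⟨s z, hs z, by simp⟩

/-- Let `A = [[1,2],[3,0]]` and `G = {v ∈ ℚ² : Aⁿ v ∈ ℤ² for some n}`.  There is no additive
group homomorphism `s : G → ℤ[1/3]` satisfying `s(a, a) = a` for all `a ∈ ℤ[1/3]`; i.e.
the inclusion `θ : ℤ[1/3] → G`, `θ(a) = (a, a)`, admits no retraction, so the short exact
sequence `0 → ℤ[1/3] → G → G/θ(ℤ[1/3]) → 0` does not split. -/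
theorem stmt13 (G : AddSubgroup (Fin 2 → ℚ))
    (hG : (G : Set (Fin 2 → ℚ)) =
      {v | ∃ n : ℕ, ∀ i, ∃ z : ℤ, ((!![(1 : ℚ), 2; 3, 0]) ^ n).mulVec v i = (z : ℚ)}) :
    ¬ ∃ s : G →+ ℚ,
      (∀ x : G, ∃ (k : ℤ) (m : ℕ), s x = (k : ℚ) / 3 ^ m) ∧
      (∀ (x : G) (a : ℚ), (∃ (k : ℤ) (m : ℕ), a = (k : ℚ) / 3 ^ m) →
        (x : Fin 2 → ℚ) = a • ![1, 1] → s x = a) := by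
  rintro ⟨s, hs_val, hs_diag⟩
  set A := !![(1 : ℚ), 2; 3, 0]
  have mem {v} (hv : EventuallyIntegral A v) : v ∈ G := by
    rw [← SetLike.mem_coe, hG]
    exact hv
  have hs : ∀ x, MemIntInvPow 3 (s x) := fun x => by simpa [MemIntInvPow] using hs_val x
  have heigen : A *ᵥ ![2, -3] = (-2 : ℚ) • ![2, -3] := by
    ext i; fin_cases i <;> norm_num [A]
  let d : G := ⟨![1, 1], mem (.of_integral fun i => ⟨1, by fin_cases i <;> simp⟩)⟩
  let x : G := ⟨![1, -1], mem (.of_integral fun i => by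
    fin_cases i; exacts [⟨1, by simp⟩, ⟨-1, by simp⟩])⟩
  let y (n : ℕ) : G := ⟨((-2 : ℚ) ^ n)⁻¹ • ![2, -3], mem (.inv_pow_smul heigen (by norm_num)
    (fun i => by fin_cases i; exacts [⟨2, by simp⟩, ⟨-3, by simp⟩]) n)⟩
  have hsd : s d = 1 := hs_diag d 1 ⟨1, 0, by norm_num⟩ (by simp [d])
  have hsy : s (y 0) = 0 := s.eq_zero_of_forall_pow_zsmul (a := -2) (b := 3)
    (Int.isCoprime_iff_gcd_eq_one.mpr (by norm_num)) (by norm_num) hs fun n =>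
      ⟨y n, Subtype.ext (by simp [y])⟩
  have hrel : (5 : ℤ) • x = d + (2 : ℤ) • y 0 :=
    Subtype.ext (by ext i; fin_cases i <;> simp [x, d, y] <;> norm_num)
  have h5 : (5 : ℤ) * s x = 1 := by simpa [hsd, hsy] using congrArg s hrel
  exact (hs x).mul_ne_one (c := 5) (Int.isCoprime_iff_gcd_eq_one.mpr (by norm_num))
    (by norm_num) (by exact_mod_cast h5)
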